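/- Let q be a prime power, F_q a finite field with q elements, let k ≥ 1, and let Q ∈ F_q[t] be a squarefree polynomial of degree d ≥ 2. If n > k(d−1), then the sum S_{d_k,n,Q}(A) := Σ_{f ∈ M_n, f ≡ A mod Q} d_k(f) is independent of A among residues coprime to Q; that is, for all A, B ∈ F_q[t] with gcd(A,Q) = gcd(B,Q) = 1, S_{d_k,n,Q}(A) = S_{d_k,n,Q}(B). -/

import Mathlib

open Polynomial

/-- The `k`-th divisor function of a polynomial: the number of `k`-tuples of monic
polynomials whose product is `f`. -/
noncomputable def dpoly (F : Type) [Field F] (k : ℕ) (f : Polynomial F) : ℕ :=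
  Set.ncard {t : Fin k → Polynomial F | (∀ i, (t i).Monic) ∧ ∏ i, t i = f}

/-- The monic polynomial `X^n + ∑_{i<n} aᵢ X^i`; as `a` ranges over `Fin n → F`, this
ranges bijectively over all monic polynomials of degree `n`. -/
noncomputable def monicOf (F : Type) [Field F] (n : ℕ) (a : Fin n → F) : Polynomial F :=
  Polynomial.X ^ n + ∑ i : Fin n, Polynomial.C (a i) * Polynomial.X ^ (i : ℕ)

/-- The sum `N_{d_k}(A;h) = ∑_{f ∈ I(A;h)} d_k(f)` of the `k`-th divisor function over the
short interval `I(A;h) = {f : deg(f - A) ≤ h}`, parametrized as `f = A + ∑_{i ≤ h} gᵢ X^i`. -/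
noncomputable def Nshort (F : Type) [Field F] [Fintype F] (k h : ℕ) (A : Polynomial F) : ℕ :=
  ∑ g : Fin (h + 1) → F,
    dpoly F k (A + ∑ i : Fin (h + 1), Polynomial.C (g i) * Polynomial.X ^ (i : ℕ))
open scoped Classical

/-- The sum `S_{d_k,n,Q}(A) = ∑_{f ∈ M_n, f ≡ A mod Q} d_k(f)` of the `k`-th divisor function
over monic polynomials of degree `n` in the arithmetic progression `A mod Q`. -/
noncomputable def Sap (F : Type) [Field F] [Fintype F] (k n : ℕ) (Q A : Polynomial F) : ℝ :=
  ∑ a ∈ Finset.univ.filter (fun a : Fin n → F => Q ∣ (monicOf F n a - A)),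
    (dpoly F k (monicOf F n a) : ℝ)

/-- The polynomial `∑_{i<d} bᵢ X^i` of degree `< d`; as `b` ranges over `Fin d → F`, this
ranges bijectively over the residues modulo a polynomial `Q` of degree `d`. -/
noncomputable def resPoly (F : Type) [Field F] (d : ℕ) (b : Fin d → F) : Polynomial F :=
  ∑ i : Fin d, Polynomial.C (b i) * Polynomial.X ^ (i : ℕ)

/-- The residues modulo `Q` (a polynomial of degree `d`) that are coprime to `Q`,
represented by polynomials of degree `< d`.  Its cardinality is `Φ(Q)`. -/
noncomputable def residues (F : Type) [Field F] [Fintype F] (d : ℕ) (Q : Polynomial F) :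
    Finset (Fin d → F) :=
  Finset.univ.filter fun b => IsCoprime (resPoly F d b) Q

/-- The mean `⟨S_{d_k,n,Q}⟩ = Φ(Q)⁻¹ ∑_{A mod Q, (A,Q)=1} S_{d_k,n,Q}(A)`. -/
noncomputable def meanSap (F : Type) [Field F] [Fintype F] (k n d : ℕ) (Q : Polynomial F) : ℝ :=
  (1 / ((residues F d Q).card : ℝ)) * ∑ b ∈ residues F d Q, Sap F k n Q (resPoly F d b)

/-- The variance `Var_Q(S_{d_k,n,Q}) = Φ(Q)⁻¹ ∑_{A mod Q, (A,Q)=1} |S_{d_k,n,Q}(A) - ⟨S⟩|²`. -/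
noncomputable def VarAP (F : Type) [Field F] [Fintype F] (k n d : ℕ) (Q : Polynomial F) : ℝ :=
  (1 / ((residues F d Q).card : ℝ)) *
    ∑ b ∈ residues F d Q, (Sap F k n Q (resPoly F d b) - meanSap F k n d Q) ^ 2

/-!
`Sap F k n Q A` counts the `k`-tuples of monic polynomials whose product has degree `n` and is
`≡ A mod Q`. As `n > k (deg Q - 1)`, some factor `fᵢ` has degree `≥ deg Q`; replacing its remainder
mod `Q` by that of `U fᵢ` keeps it monic of the same degree and multiplies the product by `U`
mod `Q`. Applied to the first such factor (which the operation does not change, as it preserves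
all degrees), this is a bijection from the class of `A` to that of `U A`, inverted by `U⁻¹ mod Q`.
-/

open Polynomial

section CommRing

variable {R : Type*} [CommRing R]

theorem exists_isCoprime_dvd_mul_sub {A B Q : R} (hA : IsCoprime A Q) (hB : IsCoprime B Q) :
    ∃ U, IsCoprime U Q ∧ Q ∣ U * A - B := by
  obtain ⟨u, v, huv⟩ := hA
  exact ⟨u * B, IsCoprime.mul_left ⟨A, v, by linear_combination huv⟩ hB,
    -(v * B), by linear_combination B * huv⟩

theorem Finset.prod_update_sub_mul_prod {ι : Type*} [Fintype ι] [DecidableEq ι]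
    (t : ι → R) (j : ι) (x U : R) :
    ∏ i, Function.update t j x i - U * ∏ i, t i = (x - U * t j) * ∏ i ∈ univ.erase j, t i := by
  rw [Finset.prod_update_of_mem (Finset.mem_univ j), Finset.sdiff_singleton_eq_erase,
    ← Finset.mul_prod_erase univ t (Finset.mem_univ j)]
  ring

end CommRing

theorem EuclideanDomain.dvd_sub_mod {R : Type*} [EuclideanDomain R] (a b : R) : b ∣ a - a % b :=
  ⟨a / b, by rw [EuclideanDomain.mod_eq_sub_mul_div]; ring⟩

theorem Polynomial.ofFn_comp_toFn_eq_id_of_degree_lt {R : Type*} [Semiring R] [DecidableEq R]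
    {n : ℕ} {p : R[X]} (hp : p.degree < n) : ofFn n (toFn n p) = p := by
  ext i
  by_cases hi : i < n
  · simp [hi, toFn]
  · rw [ofFn_coeff_eq_zero_of_ge _ (not_lt.mp hi),
      coeff_eq_zero_of_degree_lt (hp.trans_le (by exact_mod_cast not_lt.mp hi))]

variable {F : Type} [Field F]

section MonicOf

theorem monicOf_eq_X_pow_add_ofFn (n : ℕ) (a : Fin n → F) : monicOf F n a = X ^ n + ofFn n a := by
  simp only [monicOf, ofFn_eq_sum_monomial, C_mul_X_pow_eq_monomial]

theorem monic_monicOf {n : ℕ} (a : Fin n → F) : (monicOf F n a).Monic := by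
  rw [monicOf_eq_X_pow_add_ofFn]
  exact monic_X_pow_add (ofFn_degree_lt a)

theorem natDegree_monicOf {n : ℕ} (a : Fin n → F) : (monicOf F n a).natDegree = n := by
  rw [monicOf_eq_X_pow_add_ofFn, natDegree_add_eq_left_of_degree_lt, natDegree_X_pow]
  exact (ofFn_degree_lt a).trans_eq (degree_X_pow n).symm

theorem monicOf_injective (n : ℕ) : Function.Injective (monicOf F n) := by
  intro a b h
  rw [monicOf_eq_X_pow_add_ofFn, monicOf_eq_X_pow_add_ofFn] at h
  exact injective_ofFn n (add_left_cancel h)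

theorem exists_monicOf_eq {n : ℕ} {f : F[X]} (hf : f.Monic) (hn : f.natDegree = n) :
    ∃ a, monicOf F n a = f := by
  have hdeg : f.degree = (X ^ n : F[X]).degree := by
    rw [degree_X_pow, degree_eq_natDegree hf.ne_zero, hn]
  have hlow : (f - X ^ n).degree < (n : WithBot ℕ) := by
    simpa [hdeg] using
      degree_sub_lt_left hdeg hf.ne_zero (by rw [hf.leadingCoeff, leadingCoeff_X_pow])
  refine ⟨toFn n (f - X ^ n), ?_⟩
  rw [monicOf_eq_X_pow_add_ofFn, ofFn_comp_toFn_eq_id_of_degree_lt hlow, add_sub_cancel]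

end MonicOf

section Counting

theorem finite_setOf_prod_eq [Finite F] {k : ℕ} {f : F[X]} (hf : f ≠ 0) :
    {t : Fin k → F[X] | ∏ i, t i = f}.Finite := by
  have hbounded : {p : F[X] | p.natDegree ≤ f.natDegree}.Finite := by
    refine Set.Finite.of_finite_image (f := toFn (f.natDegree + 1)) (Set.toFinite _) ?_
    intro p hp q hq h
    have := congrArg (ofFn (f.natDegree + 1)) h
    rwa [ofFn_comp_toFn_eq_id_of_natDegree_lt (Nat.lt_succ_of_le hp),
      ofFn_comp_toFn_eq_id_of_natDegree_lt (Nat.lt_succ_of_le hq)] at this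
  refine (Set.Finite.pi (t := fun _ : Fin k => {p : F[X] | p.natDegree ≤ f.natDegree})
    fun _ => hbounded).subset fun t ht i _ => ?_
  exact natDegree_le_of_dvd (ht ▸ Finset.dvd_prod_of_mem t (Finset.mem_univ i)) hf

def progressionTuples (k n : ℕ) (Q A : F[X]) : Set (Fin k → F[X]) :=
  {t | (∀ i, (t i).Monic) ∧ (∏ i, t i).natDegree = n ∧ Q ∣ ∏ i, t i - A}

theorem Sap_eq_ncard_progressionTuples [Fintype F] (k n : ℕ) (Q A : F[X]) :
    Sap F k n Q A = (progressionTuples k n Q A).ncard := by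
  set s := Finset.univ.filter fun a : Fin n → F => Q ∣ monicOf F n a - A
  set D := fun a : Fin n → F => {t : Fin k → F[X] | (∀ i, (t i).Monic) ∧ ∏ i, t i = monicOf F n a}
  have hunion : progressionTuples k n Q A = ⋃ a ∈ (s : Set (Fin n → F)), D a := by
    ext t
    simp only [progressionTuples, D, s, Set.mem_ofPred_eq, Set.mem_iUnion, Finset.coe_filter,
      Finset.mem_univ, true_and, exists_prop]
    constructor
    · rintro ⟨hmonic, hdeg, hdvd⟩
      obtain ⟨a, ha⟩ := exists_monicOf_eq (monic_prod_of_monic _ _ fun i _ => hmonic i) hdeg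
      exact ⟨a, ha ▸ hdvd, hmonic, ha.symm⟩
    · rintro ⟨a, hdvd, hmonic, hprod⟩
      exact ⟨hmonic, hprod ▸ natDegree_monicOf a, hprod ▸ hdvd⟩
  have hdisj : (s : Set (Fin n → F)).PairwiseDisjoint D := fun a _ b _ hab =>
    Set.disjoint_left.2 fun t hta htb => hab (monicOf_injective n (hta.2.symm.trans htb.2))
  rw [Sap, hunion, Set.Finite.ncard_biUnion s.finite_toSet
    (fun a _ => (finite_setOf_prod_eq (monic_monicOf a).ne_zero).subset fun t ht => ht.2) hdisj,
    finsum_mem_coe_finset]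
  push_cast
  rfl

end Counting

section ShiftResidue

noncomputable def shiftResidue (Q U f : F[X]) : F[X] := f - f % Q + U * f % Q

theorem dvd_shiftResidue_sub (Q U f : F[X]) : Q ∣ shiftResidue Q U f - U * f := by
  have : shiftResidue Q U f - U * f = (f - f % Q) - (U * f - U * f % Q) := by
    rw [shiftResidue]; ring
  rw [this]
  exact dvd_sub (EuclideanDomain.dvd_sub_mod f Q) (EuclideanDomain.dvd_sub_mod (U * f) Q)

theorem shiftResidue_shiftResidue {Q U U' : F[X]} (hUU' : Q ∣ U' * U - 1) (f : F[X]) :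
    shiftResidue Q U' (shiftResidue Q U f) = f := by
  have hmod : shiftResidue Q U f % Q = U * f % Q :=
    mod_eq_of_dvd_sub (dvd_shiftResidue_sub Q U f)
  have hmod' : U' * shiftResidue Q U f % Q = f % Q := by
    refine mod_eq_of_dvd_sub ?_
    have : U' * shiftResidue Q U f - f = U' * (shiftResidue Q U f - U * f) + (U' * U - 1) * f := by
      ring
    rw [this]
    exact dvd_add (dvd_mul_of_dvd_right (dvd_shiftResidue_sub Q U f) U') (dvd_mul_of_dvd_left hUU' f)
  rw [shiftResidue, hmod, hmod', shiftResidue]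
  ring

theorem degree_shiftResidue_sub_lt {Q : F[X]} (hQ : Q ≠ 0) (U f : F[X]) :
    (shiftResidue Q U f - f).degree < Q.degree := by
  have : shiftResidue Q U f - f = U * f % Q - f % Q := by rw [shiftResidue]; ring
  rw [this]
  exact (degree_sub_le _ _).trans_lt (max_lt (degree_mod_lt _ hQ) (degree_mod_lt _ hQ))

theorem degree_shiftResidue_sub_lt_degree {Q f : F[X]} (hQ : Q ≠ 0) (hf : f ≠ 0)
    (hQf : Q.natDegree ≤ f.natDegree) (U : F[X]) :
    (shiftResidue Q U f - f).degree < f.degree :=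
  (degree_shiftResidue_sub_lt hQ U f).trans_le <| by
    rw [degree_eq_natDegree hQ, degree_eq_natDegree hf]
    exact_mod_cast hQf

theorem monic_shiftResidue {Q f : F[X]} (hQ : Q ≠ 0) (hf : f.Monic)
    (hQf : Q.natDegree ≤ f.natDegree) (U : F[X]) : (shiftResidue Q U f).Monic := by
  rw [← add_sub_cancel f (shiftResidue Q U f)]
  exact hf.add_of_left (degree_shiftResidue_sub_lt_degree hQ hf.ne_zero hQf U)

theorem natDegree_shiftResidue {Q f : F[X]} (hQ : Q ≠ 0) (hf : f ≠ 0)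
    (hQf : Q.natDegree ≤ f.natDegree) (U : F[X]) :
    (shiftResidue Q U f).natDegree = f.natDegree := by
  rw [← add_sub_cancel f (shiftResidue Q U f)]
  exact natDegree_add_eq_left_of_degree_lt (degree_shiftResidue_sub_lt_degree hQ hf hQf U)

end ShiftResidue

section ShiftTuple

variable {k : ℕ}

/-- The factor to shift is found from the degrees alone, so it is found again after the shift;
this is what makes `shiftTuple Q U'` invert `shiftTuple Q U` when `U' U ≡ 1 mod Q`. -/
noncomputable def shiftTuple (Q U : F[X]) (t : Fin k → F[X]) : Fin k → F[X] :=
  if h : ∃ i, Q.natDegree ≤ (t i).natDegree then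
    Function.update t (Fin.find _ h) (shiftResidue Q U (t (Fin.find _ h)))
  else t

theorem shiftTuple_of_exists {Q U : F[X]} {t : Fin k → F[X]}
    (h : ∃ i, Q.natDegree ≤ (t i).natDegree) :
    shiftTuple Q U t = Function.update t (Fin.find _ h) (shiftResidue Q U (t (Fin.find _ h))) :=
  dif_pos h

theorem shiftTuple_apply_monic_and_natDegree {Q : F[X]} (hQ : Q ≠ 0) {t : Fin k → F[X]}
    (ht : ∀ i, (t i).Monic) (U : F[X]) (i : Fin k) :
    (shiftTuple Q U t i).Monic ∧ (shiftTuple Q U t i).natDegree = (t i).natDegree := by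
  by_cases h : ∃ i, Q.natDegree ≤ (t i).natDegree
  · rw [shiftTuple_of_exists h]
    obtain rfl | hi := eq_or_ne i (Fin.find _ h)
    · have hle := Fin.find_spec h
      rw [Function.update_self]
      exact ⟨monic_shiftResidue hQ (ht _) hle U, natDegree_shiftResidue hQ (ht _).ne_zero hle U⟩
    · rw [Function.update_of_ne hi]
      exact ⟨ht i, rfl⟩
  · rw [shiftTuple, dif_neg h]
    exact ⟨ht i, rfl⟩

theorem shiftTuple_shiftTuple {Q U U' : F[X]} (hQ : Q ≠ 0) (hUU' : Q ∣ U' * U - 1)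
    {t : Fin k → F[X]} (ht : ∀ i, (t i).Monic) :
    shiftTuple Q U' (shiftTuple Q U t) = t := by
  by_cases h : ∃ i, Q.natDegree ≤ (t i).natDegree
  · have hdeg i := (shiftTuple_apply_monic_and_natDegree hQ ht U i).2
    have h' : ∃ i, Q.natDegree ≤ (shiftTuple Q U t i).natDegree := by simpa only [hdeg] using h
    have hfind : Fin.find _ h' = Fin.find _ h := Fin.find_congr' (by simp only [hdeg, implies_true])
    rw [shiftTuple_of_exists h', hfind, shiftTuple_of_exists h]
    simp only [Function.update_idem, Function.update_self, shiftResidue_shiftResidue hUU',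
      Function.update_eq_self]
  · simp only [shiftTuple, dif_neg h]

theorem shiftTuple_mem_progressionTuples {Q U A B : F[X]} {n : ℕ} (hQ : Q ≠ 0)
    (hn : k * (Q.natDegree - 1) < n) (hUA : Q ∣ U * A - B) {t : Fin k → F[X]}
    (ht : t ∈ progressionTuples k n Q A) : shiftTuple Q U t ∈ progressionTuples k n Q B := by
  obtain ⟨hmonic, hdeg, hdvd⟩ := ht
  have hsame := shiftTuple_apply_monic_and_natDegree hQ hmonic U
  have hprod_deg : (∏ i, t i).natDegree = ∑ i, (t i).natDegree :=
    natDegree_prod_of_monic _ _ fun i _ => hmonic i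
  have hlarge : ∃ i, Q.natDegree ≤ (t i).natDegree := by
    obtain ⟨i, -, hi⟩ := Finset.exists_lt_of_sum_lt (s := Finset.univ)
      (f := fun _ => Q.natDegree - 1) (g := fun i => (t i).natDegree)
      (by simpa [← hprod_deg, hdeg] using hn)
    exact ⟨i, by omega⟩
  refine ⟨fun i => (hsame i).1, ?_, ?_⟩
  · rw [natDegree_prod_of_monic _ _ fun i _ => (hsame i).1, ← hdeg, hprod_deg]
    exact Finset.sum_congr rfl fun i _ => (hsame i).2
  · have hshift : Q ∣ ∏ i, shiftTuple Q U t i - U * ∏ i, t i := by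
      rw [shiftTuple_of_exists hlarge, Finset.prod_update_sub_mul_prod]
      exact dvd_mul_of_dvd_left (dvd_shiftResidue_sub Q U _) _
    have : ∏ i, shiftTuple Q U t i - B =
        (∏ i, shiftTuple Q U t i - U * ∏ i, t i) + U * (∏ i, t i - A) + (U * A - B) := by
      ring
    rw [this]
    exact dvd_add (dvd_add hshift (dvd_mul_of_dvd_right hdvd U)) hUA

theorem bijOn_shiftTuple {Q U A B : F[X]} {n : ℕ} (hQ : Q ≠ 0) (hn : k * (Q.natDegree - 1) < n)
    (hU : IsCoprime U Q) (hUA : Q ∣ U * A - B) :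
    Set.BijOn (shiftTuple Q U) (progressionTuples k n Q A) (progressionTuples k n Q B) := by
  obtain ⟨U', V, hUV⟩ := hU
  have hU'U : Q ∣ U' * U - 1 := ⟨-V, by linear_combination hUV⟩
  have hUU' : Q ∣ U * U' - 1 := mul_comm U U' ▸ hU'U
  have hU'B : Q ∣ U' * B - A := by
    have : U' * B - A = (U' * U - 1) * A - U' * (U * A - B) := by ring
    rw [this]
    exact dvd_sub (dvd_mul_of_dvd_left hU'U A) (dvd_mul_of_dvd_right hUA U')
  exact Set.InvOn.bijOn
    ⟨fun t ht => shiftTuple_shiftTuple hQ hU'U ht.1, fun t ht => shiftTuple_shiftTuple hQ hUU' ht.1⟩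
    (fun t ht => shiftTuple_mem_progressionTuples hQ hn hUA ht)
    (fun t ht => shiftTuple_mem_progressionTuples hQ hn hU'B ht)

end ShiftTuple

theorem progression_sum_independent_of_residue_general (F : Type) [Field F] [Fintype F]
    (k d n : ℕ) (hd : 2 ≤ d)
    (Q : Polynomial F) (hQdeg : Q.natDegree = d)
    (hn : k * (d - 1) < n)
    (A B : Polynomial F) (hA : IsCoprime A Q) (hB : IsCoprime B Q) :
    Sap F k n Q A = Sap F k n Q B := by
  have hQ : Q ≠ 0 := by
    rintro rfl
    rw [natDegree_zero] at hQdeg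
    omega
  obtain ⟨U, hU, hUA⟩ := exists_isCoprime_dvd_mul_sub hA hB
  rw [Sap_eq_ncard_progressionTuples, Sap_eq_ncard_progressionTuples,
    (bijOn_shiftTuple hQ (hQdeg ▸ hn) hU hUA).ncard_eq]

theorem progression_sum_independent_of_residue (F : Type) [Field F] [Fintype F]
    (k d n : ℕ) (hk : 1 ≤ k) (hd : 2 ≤ d)
    (Q : Polynomial F) (hQsf : Squarefree Q) (hQdeg : Q.natDegree = d)
    (hn : k * (d - 1) < n)
    (A B : Polynomial F) (hA : IsCoprime A Q) (hB : IsCoprime B Q) :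
    Sap F k n Q A = Sap F k n Q B :=
  progression_sum_independent_of_residue_general F k d n hd Q hQdeg hn A B hA hB
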